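/- arXiv:2003.09704 — 4 statements merged into one kernel-verified Lean document; each statement's English description precedes it below -/
import Mathlib

section
/- Let F : Γ₁ → Γ₂ be a graph homomorphism between finite simple graphs. Then the pullback maps F* : Ω⁰(Γ₂) → Ω⁰(Γ₁) and F* : Ω¹(Γ₂) → Ω¹(Γ₁) are both linear isomorphisms if and only if F is a graph isomorphism. -/
open SimpleGraph Function

open scoped Classical

variable {U V W : Type*}

/-- The space `Ω¹(G)` of edge forms: antisymmetric real functions supported on adjacent pairs. -/
def edgeForms (G : SimpleGraph V) : Submodule ℝ (V → V → ℝ) where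
  carrier := {ω | (∀ v w, ω v w = - ω w v) ∧ ∀ v w, ¬ G.Adj v w → ω v w = 0}
  add_mem' := fun {a b} ha hb => ⟨fun v w => by
      have h1 := ha.1 v w; have h2 := hb.1 v w
      simp only [Pi.add_apply]; linarith,
    fun v w h => by simp only [Pi.add_apply, ha.2 v w h, hb.2 v w h, add_zero]⟩
  zero_mem' := ⟨fun v w => by simp, fun v w h => rfl⟩
  smul_mem' := fun c a ha => ⟨fun v w => by
      simp only [Pi.smul_apply, smul_eq_mul, ha.1 v w]; ring,
    fun v w h => by simp only [Pi.smul_apply, smul_eq_mul, ha.2 v w h, mul_zero]⟩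

/-- The coboundary operator `D : Ω⁰(G) → Ω¹(G)`, `(Df)(v,w) = f w - f v` on adjacent pairs. -/
noncomputable def coboundary (G : SimpleGraph V) : (V → ℝ) →ₗ[ℝ] edgeForms G where
  toFun f := ⟨fun v w => if G.Adj v w then f w - f v else 0, by
    constructor
    · intro v w
      dsimp only
      by_cases h : G.Adj v w
      · rw [if_pos h, if_pos h.symm]; ring
      · rw [if_neg h, if_neg (fun h' => h h'.symm)]; ring
    · intro v w h; dsimp only; rw [if_neg h]⟩
  map_add' f g := Subtype.ext <| funext fun v => funext fun w => by
    by_cases h : G.Adj v w <;> simp [h] <;> ring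
  map_smul' c f := Subtype.ext <| funext fun v => funext fun w => by
    by_cases h : G.Adj v w <;> simp [h] <;> ring

@[simp] lemma coboundary_apply (G : SimpleGraph V) (f : V → ℝ) (v w : V) :
    (coboundary G f : V → V → ℝ) v w = if G.Adj v w then f w - f v else 0 := rfl

/-- `H⁰(G) = ker D`. -/
noncomputable def H0 (G : SimpleGraph V) : Submodule ℝ (V → ℝ) := LinearMap.ker (coboundary G)

/-- `H¹(G) = Ω¹(G) / Im D`. -/
noncomputable abbrev H1 (G : SimpleGraph V) :=
  (edgeForms G) ⧸ (LinearMap.range (coboundary G))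

/-- The pullback `F* : Ω¹(G₂) → Ω¹(G₁)` of a graph homomorphism. -/
noncomputable def pullback {G₁ : SimpleGraph U} {G₂ : SimpleGraph V} (F : G₁ →g G₂) :
    edgeForms G₂ →ₗ[ℝ] edgeForms G₁ where
  toFun ω := ⟨fun v w => if G₁.Adj v w then (ω : V → V → ℝ) (F v) (F w) else 0, by
    constructor
    · intro v w
      dsimp only
      by_cases h : G₁.Adj v w
      · rw [if_pos h, if_pos h.symm, ω.2.1]
      · rw [if_neg h, if_neg (fun h' => h h'.symm), neg_zero]
    · intro v w h; dsimp only; rw [if_neg h]⟩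
  map_add' a b := Subtype.ext <| funext fun v => funext fun w => by
    by_cases h : G₁.Adj v w <;> simp [h]
  map_smul' c a := Subtype.ext <| funext fun v => funext fun w => by
    by_cases h : G₁.Adj v w <;> simp [h]

@[simp] lemma pullback_apply {G₁ : SimpleGraph U} {G₂ : SimpleGraph V} (F : G₁ →g G₂)
    (ω : edgeForms G₂) (v w : U) :
    (pullback F ω : U → U → ℝ) v w = if G₁.Adj v w then (ω : V → V → ℝ) (F v) (F w) else 0 := rfl

/-- For a graph homomorphism `F : Γ₁ → Γ₂` between finite simple graphs,
the pullbacks `F* : Ω⁰(Γ₂) → Ω⁰(Γ₁)` (given by `f ↦ f ∘ F`) and `F* : Ω¹(Γ₂) → Ω¹(Γ₁)`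
are both linear isomorphisms if and only if `F` is a graph isomorphism. -/
theorem pullback_bijective_iff_iso [Fintype U] [Fintype V]
    {G₁ : SimpleGraph U} {G₂ : SimpleGraph V} (F : G₁ →g G₂) :
    (Function.Bijective ⇑(LinearMap.funLeft ℝ ℝ ⇑F) ∧ Function.Bijective ⇑(pullback F)) ↔
      ∃ e : G₁ ≃g G₂, ⇑e = ⇑F := by
  constructor
  · rintro ⟨h0, h1⟩
    have hFinj : Function.Injective F := by
      intro a b hab
      by_contra hne
      obtain ⟨g, hg⟩ := h0.2 (fun u => if u = a then (1:ℝ) else 0)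
      have ha := congrFun hg a
      have hb := congrFun hg b
      simp only [LinearMap.funLeft_apply] at ha hb
      rw [hab] at ha
      rw [ha] at hb
      rw [if_pos trivial, if_neg (Ne.symm hne)] at hb
      exact one_ne_zero hb
    have hFsurj : Function.Surjective F := by
      intro w
      by_contra hw
      push_neg at hw
      have hz : (LinearMap.funLeft ℝ ℝ ⇑F) (fun u => if u = w then (1:ℝ) else 0) =
          (LinearMap.funLeft ℝ ℝ ⇑F) 0 := by
        funext u
        simp only [LinearMap.funLeft_apply, map_zero]
        rw [if_neg (hw u)]
        rfl
      have := congrFun (h0.1 hz) w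
      simp only [if_pos rfl] at this
      exact one_ne_zero this
    have hrefl : ∀ v w, G₂.Adj (F v) (F w) → G₁.Adj v w := by
      intro v w hadj
      by_contra hna
      set ω : V → V → ℝ := fun x y =>
        (if x = F v ∧ y = F w then (1:ℝ) else 0) - (if x = F w ∧ y = F v then 1 else 0) with hωdef
      have hω : ω ∈ edgeForms G₂ := by
        constructor
        · intro x y
          have h1 : (y = F v ∧ x = F w) ↔ (x = F w ∧ y = F v) := and_comm
          have h2 : (y = F w ∧ x = F v) ↔ (x = F v ∧ y = F w) := and_comm
          simp only [hωdef]
          rw [if_congr h1 rfl rfl, if_congr h2 rfl rfl]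
          ring
        · intro x y h
          simp only [hωdef]
          rw [if_neg, if_neg, sub_zero]
          · rintro ⟨rfl, rfl⟩; exact h hadj.symm
          · rintro ⟨rfl, rfl⟩; exact h hadj
      have hpz : pullback F ⟨ω, hω⟩ = 0 := by
        apply Subtype.ext; funext a b
        simp only [pullback_apply]
        by_cases h : G₁.Adj a b
        · rw [if_pos h]
          have hc1 : ¬(F a = F v ∧ F b = F w) := by
            rintro ⟨h1, h2⟩
            exact hna (by rw [← hFinj h1, ← hFinj h2]; exact h)
          have hc2 : ¬(F a = F w ∧ F b = F v) := by
            rintro ⟨h1, h2⟩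
            exact hna (by rw [← hFinj h1, ← hFinj h2]; exact h.symm)
          simp only [hωdef]
          rw [if_neg hc1, if_neg hc2, sub_zero]
          simp
        · rw [if_neg h]; simp
      have hz0 := h1.1 (hpz.trans (map_zero (pullback F)).symm)
      have hval := congrFun (congrFun (congrArg Subtype.val hz0) (F v)) (F w)
      simp only [hωdef] at hval
      rw [if_pos ⟨trivial, trivial⟩, if_neg, sub_zero] at hval
      · simp at hval
      · rintro ⟨h1, h2⟩; exact hadj.ne h1
    refine ⟨⟨Equiv.ofBijective F ⟨hFinj, hFsurj⟩, ?_⟩, rfl⟩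
    intro a b
    exact ⟨hrefl a b, fun h => F.map_adj h⟩
  · rintro ⟨e, he⟩
    have hsymm : ∀ x, F (e.symm x) = x := by
      intro x; rw [← he]; exact e.apply_symm_apply x
    have hsymm' : ∀ a, e.symm (F a) = a := by
      intro a; rw [← he]; exact e.symm_apply_apply a
    have hba : ∀ a b, G₁.Adj a b ↔ G₂.Adj (F a) (F b) := by
      intro a b; rw [← he]; exact e.map_rel_iff.symm
    constructor
    · constructor
      · intro g₁ g₂ hg
        funext x
        have := congrFun hg (e.symm x)
        simpa only [LinearMap.funLeft_apply, hsymm] using this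
      · intro g
        refine ⟨fun x => g (e.symm x), ?_⟩
        funext a
        simp only [LinearMap.funLeft_apply, hsymm']
    · constructor
      · intro ω₁ ω₂ hω
        apply Subtype.ext; funext x y
        by_cases h : G₂.Adj x y
        · have hadj : G₁.Adj (e.symm x) (e.symm y) := by
            rw [hba, hsymm, hsymm]; exact h
          have h2 := congrFun (congrFun (congrArg Subtype.val hω) (e.symm x)) (e.symm y)
          simp only [pullback_apply, if_pos hadj, hsymm] at h2
          exact h2
        · rw [ω₁.2.2 x y h, ω₂.2.2 x y h]
      · intro ω₁
        refine ⟨⟨fun x y => if G₂.Adj x y then (ω₁ : U → U → ℝ) (e.symm x) (e.symm y) else 0,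
            ?_, ?_⟩, ?_⟩
        · intro x y
          by_cases h : G₂.Adj x y
          · dsimp only; rw [if_pos h, if_pos h.symm, ω₁.2.1]
          · dsimp only; rw [if_neg h, if_neg (fun h' => h h'.symm), neg_zero]
        · intro x y h; dsimp only; rw [if_neg h]
        · apply Subtype.ext; funext a b
          simp only [pullback_apply]
          by_cases h : G₁.Adj a b
          · rw [if_pos h, if_pos ((hba a b).mp h), hsymm', hsymm']
          · rw [if_neg h, (ω₁.2.2 a b h)]
end

section
/- Let Γ be a finite simple graph. Then Γ has at least two isomorphic connected components if and only if there exists an automorphism g of Γ whose induced action on H⁰(Γ) is not the identity, i.e., g*f ≠ f for some f ∈ H⁰(Γ) = ker D. -/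
open SimpleGraph Function

open scoped Classical

variable {U V W : Type*}

private lemma mem_ker_coboundary_iff (Γ : SimpleGraph V) (f : V → ℝ) :
    f ∈ LinearMap.ker (coboundary Γ) ↔ ∀ v w, Γ.Adj v w → f v = f w := by
  rw [LinearMap.mem_ker]
  constructor
  · intro h v w hvw
    have h2 : (coboundary Γ f : V → V → ℝ) v w = 0 := by rw [h]; rfl
    rw [coboundary_apply, if_pos hvw] at h2
    linarith
  · intro h
    apply Subtype.ext
    funext v w
    rw [coboundary_apply]
    show _ = (0 : V → V → ℝ) v w
    split_ifs with hvw
    · rw [h v w hvw]; simp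
    · rfl

private lemma constant_on_reachable {Γ : SimpleGraph V} {f : V → ℝ}
    (hf : ∀ v w, Γ.Adj v w → f v = f w) {v w : V} (h : Γ.Reachable v w) : f v = f w := by
  obtain ⟨p⟩ := h
  induction p with
  | nil => rfl
  | cons h _ ih => exact (hf _ _ h).trans ih

/-- A finite simple graph `Γ` has at least two isomorphic connected
components iff some automorphism of `Γ` acts nontrivially on `H⁰(Γ) = ker D`. -/
theorem two_isomorphic_components_iff_nontrivial_H0_action [Fintype V]
    (Γ : SimpleGraph V) :
    (∃ c₁ c₂ : Γ.ConnectedComponent, c₁ ≠ c₂ ∧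
        Nonempty (Γ.induce c₁.supp ≃g Γ.induce c₂.supp)) ↔
      ∃ (g : Γ ≃g Γ) (f : V → ℝ), f ∈ LinearMap.ker (coboundary Γ) ∧ ∃ v : V, f (g v) ≠ f v := by
  constructor
  · rintro ⟨c₁, c₂, hne, ⟨φ⟩⟩
    classical
    have hdisj : ∀ v : V, v ∈ c₁.supp → v ∈ c₂.supp → False := by
      intro v h1 h2
      rw [ConnectedComponent.mem_supp_iff] at h1 h2
      exact hne (h1 ▸ h2)
    let g0 : V → V := fun v =>
      if h : v ∈ c₁.supp then (φ ⟨v, h⟩ : V)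
      else if h : v ∈ c₂.supp then (φ.symm ⟨v, h⟩ : V)
      else v
    have hg1 : ∀ (v : V) (h : v ∈ c₁.supp), g0 v = (φ ⟨v, h⟩ : V) := by
      intro v h; simp only [g0, dif_pos h]
    have hg2 : ∀ (v : V) (h : v ∈ c₂.supp), g0 v = (φ.symm ⟨v, h⟩ : V) := by
      intro v h
      have h1 : v ∉ c₁.supp := fun h1 => hdisj v h1 h
      simp only [g0, dif_neg h1, dif_pos h]
    have hg3 : ∀ v : V, v ∉ c₁.supp → v ∉ c₂.supp → g0 v = v := by
      intro v h1 h2; simp only [g0, dif_neg h1, dif_neg h2]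
    have hinv : Function.Involutive g0 := by
      intro v
      by_cases h1 : v ∈ c₁.supp
      · rw [hg1 v h1]
        rw [hg2 _ (φ ⟨v, h1⟩).2]
        simp
      · by_cases h2 : v ∈ c₂.supp
        · rw [hg2 v h2]
          rw [hg1 _ (φ.symm ⟨v, h2⟩).2]
          simp
        · rw [hg3 v h1 h2, hg3 v h1 h2]
    have hadj : ∀ v w : V, Γ.Adj v w → Γ.Adj (g0 v) (g0 w) := by
      intro v w hvw
      have hcomp : Γ.connectedComponentMk v = Γ.connectedComponentMk w :=
        ConnectedComponent.eq.mpr hvw.reachable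
      by_cases h1 : v ∈ c₁.supp
      · have hw1 : w ∈ c₁.supp := by
          rw [ConnectedComponent.mem_supp_iff] at h1 ⊢
          rw [← hcomp]; exact h1
        rw [hg1 v h1, hg1 w hw1]
        have := φ.map_adj_iff.mpr (show (Γ.induce c₁.supp).Adj ⟨v, h1⟩ ⟨w, hw1⟩ by
          simp only [comap_adj, Function.Embedding.coe_subtype]; exact hvw)
        simpa only [comap_adj, Function.Embedding.coe_subtype] using this
      · by_cases h2 : v ∈ c₂.supp
        · have hw2 : w ∈ c₂.supp := by
            rw [ConnectedComponent.mem_supp_iff] at h2 ⊢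
            rw [← hcomp]; exact h2
          rw [hg2 v h2, hg2 w hw2]
          have := φ.symm.map_adj_iff.mpr (show (Γ.induce c₂.supp).Adj ⟨v, h2⟩ ⟨w, hw2⟩ by
            simp only [comap_adj, Function.Embedding.coe_subtype]; exact hvw)
          simpa only [comap_adj, Function.Embedding.coe_subtype] using this
        · have hw1 : w ∉ c₁.supp := by
            rw [ConnectedComponent.mem_supp_iff] at h1 ⊢
            rw [← hcomp]; exact h1
          have hw2 : w ∉ c₂.supp := by
            rw [ConnectedComponent.mem_supp_iff] at h2 ⊢
            rw [← hcomp]; exact h2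
          rw [hg3 v h1 h2, hg3 w hw1 hw2]
          exact hvw
    let g : Γ ≃g Γ :=
      ⟨hinv.toPerm g0, by
        intro a b
        constructor
        · intro h
          have := hadj _ _ h
          show Γ.Adj a b
          rwa [show g0 ((hinv.toPerm g0) a) = a from hinv a,
            show g0 ((hinv.toPerm g0) b) = b from hinv b] at this
        · exact hadj a b⟩
    let f : V → ℝ := fun v => if Γ.connectedComponentMk v = c₁ then 1 else 0
    refine ⟨g, f, ?_, ?_⟩
    · rw [mem_ker_coboundary_iff]
      intro v w hvw
      have hcomp : Γ.connectedComponentMk v = Γ.connectedComponentMk w :=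
        ConnectedComponent.eq.mpr hvw.reachable
      simp only [f, hcomp]
    · obtain ⟨v₀, hv₀⟩ := c₁.exists_rep
      have hmem : v₀ ∈ c₁.supp := by rw [ConnectedComponent.mem_supp_iff]; exact hv₀
      refine ⟨v₀, ?_⟩
      have hgv : g v₀ ∈ c₂.supp := by
        show g0 v₀ ∈ c₂.supp
        rw [hg1 v₀ hmem]
        exact (φ ⟨v₀, hmem⟩).2
      rw [ConnectedComponent.mem_supp_iff] at hgv
      have e1 : f (g v₀) = 0 := by simp only [f, hgv, if_neg hne.symm]
      have e2 : f v₀ = 1 := by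
        simp only [f]; rw [if_pos]; exact hv₀
      rw [e1, e2]; norm_num
  · rintro ⟨g, f, hf, v, hv⟩
    rw [mem_ker_coboundary_iff] at hf
    refine ⟨Γ.connectedComponentMk v, Γ.connectedComponentMk (g v), ?_, ?_⟩
    · intro h
      rw [ConnectedComponent.eq] at h
      exact hv (constant_on_reachable hf h.symm)
    · refine ⟨⟨⟨fun x => ⟨g x, ?_⟩, fun x => ⟨g.symm x, ?_⟩, ?_, ?_⟩, ?_⟩⟩
      · have := ConnectedComponent.mem_supp_iff _ _ |>.mp x.2
        rw [ConnectedComponent.mem_supp_iff, ConnectedComponent.eq]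
        exact (ConnectedComponent.eq.mp this).map g.toHom
      · have := ConnectedComponent.mem_supp_iff _ _ |>.mp x.2
        rw [ConnectedComponent.mem_supp_iff, ConnectedComponent.eq]
        have h2 := (ConnectedComponent.eq.mp this).map g.symm.toHom
        simpa using h2
      · intro x; apply Subtype.ext; simp
      · intro x; apply Subtype.ext; simp
      · intro a b
        simp only [Equiv.coe_fn_mk, comap_adj, Function.Embedding.coe_subtype]
        exact g.map_adj_iff
end

section
/- Let Γ be a finite simple graph and g an automorphism of Γ. Then the induced action of g on H¹(Γ) is the identity if and only if g restricts to a rotation on each cycle of Γ; precisely, if and only if for every cycle subgraph C of Γ and every choice of cyclic orientation of C with associated cycle form ω_C, one has g*ω_C = ω_C (equivalently, g maps C onto itself preserving the cyclic orientation). -/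
open SimpleGraph Function

open scoped Classical

variable {U V W : Type*}

/-- The cycle form `ω_C ∈ Ω¹(Γ)` associated to a cyclically ordered cycle
`c : ZMod n → V` in `Γ`: value `1` on the pairs `(c i, c (i+1))`, `-1` on the reversed
pairs, and `0` elsewhere. -/
noncomputable def cycleForm {Γ : SimpleGraph V} {n : ℕ} (c : ZMod n → V)
    (hc : ∀ i, Γ.Adj (c i) (c (i + 1))) : edgeForms Γ :=
  ⟨fun v w => (if ∃ i, c i = v ∧ c (i + 1) = w then (1 : ℝ) else 0)
      - (if ∃ i, c i = w ∧ c (i + 1) = v then (1 : ℝ) else 0), by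
    constructor
    · intro v w
      dsimp only
      ring
    · intro v w h
      dsimp only
      have h1 : ¬ ∃ i, c i = v ∧ c (i + 1) = w := by
        rintro ⟨i, rfl, rfl⟩; exact h (hc i)
      have h2 : ¬ ∃ i, c i = w ∧ c (i + 1) = v := by
        rintro ⟨i, rfl, rfl⟩; exact h ((hc i).symm)
      rw [if_neg h1, if_neg h2, sub_zero]⟩

/-! An edge form is a coboundary as soon as its sum along every cycle vanishes: summing it along
walks from a base point of each component then gives a potential, because the sum along a walk
equals the sum along its bypass, each detour removed by the bypass closing up into a cycle or a
back-and-forth step.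

If `g` rotates every cycle `C`, then `g*ω` and `ω` have the same sum around `C`, so `g*ω - ω` is
exact. Conversely, if `g*ω_C - ω_C` is exact, its sum around `C` vanishes, so the `n` terms
`(g*ω_C)(c i, c (i+1))`, each at most `1`, add up to `n`. Hence `g` sends every oriented edge of
`C` to an oriented edge of `C`, which forces `g` to be a rotation of `C`, and rotations fix `ω_C`.
-/

section WalkSum

variable {G : SimpleGraph V} (ω : V → V → ℝ)

noncomputable def walkSum {u v : V} (p : G.Walk u v) : ℝ :=
  (p.darts.map fun d => ω d.fst d.snd).sum

@[simp] lemma walkSum_nil {u : V} : walkSum ω (Walk.nil : G.Walk u u) = 0 := rfl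

@[simp] lemma walkSum_cons {u v w : V} (h : G.Adj u v) (p : G.Walk v w) :
    walkSum ω (Walk.cons h p) = ω u v + walkSum ω p := rfl

@[simp] lemma walkSum_append {u v w : V} (p : G.Walk u v) (q : G.Walk v w) :
    walkSum ω (p.append q) = walkSum ω p + walkSum ω q := by
  simp [walkSum, Walk.darts_append]

@[simp] lemma walkSum_concat {u v w : V} (p : G.Walk u v) (h : G.Adj v w) :
    walkSum ω (p.concat h) = walkSum ω p + ω v w := by
  simp [walkSum, Walk.darts_concat]

@[simp] lemma walkSum_copy {u v u' v' : V} (p : G.Walk u v) (hu : u = u') (hv : v = v') :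
    walkSum ω (p.copy hu hv) = walkSum ω p := by
  subst hu hv; rfl

lemma walkSum_eq_sum_range {u v : V} (p : G.Walk u v) :
    walkSum ω p = ∑ k ∈ Finset.range p.length, ω (p.getVert k) (p.getVert (k + 1)) := by
  induction p with
  | nil => rfl
  | cons h p ih =>
    rw [walkSum_cons, ih, Walk.length_cons, Finset.sum_range_succ']
    simp only [Walk.getVert_cons_succ, Walk.getVert_zero]
    ring

variable {ω}

lemma walkSum_reverse (hω : ∀ v w, ω v w = - ω w v) {u v : V} (p : G.Walk u v) :
    walkSum ω p.reverse = - walkSum ω p := by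
  induction p with
  | nil => simp
  | @cons u v w h p ih =>
    rw [Walk.reverse_cons, walkSum_append, ih, walkSum_cons, walkSum_cons, walkSum_nil]
    linarith [hω u v]

lemma walkSum_cons_eq_zero_of_isPath (hω : ∀ v w, ω v w = - ω w v)
    (hcyc : ∀ (u : V) (p : G.Walk u u), p.IsCycle → walkSum ω p = 0)
    {u v : V} (h : G.Adj u v) {p : G.Walk v u} (hp : p.IsPath) :
    walkSum ω (Walk.cons h p) = 0 := by
  rcases p with _ | ⟨h', _ | ⟨h'', q⟩⟩
  · exact (G.irrefl h).elim
  · simp [hω u v]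
  · refine hcyc _ _ (Walk.isCycle_iff_isPath_tail_and_le_length.mpr ⟨?_, ?_⟩)
    · simpa using hp
    · simp

lemma walkSum_bypass (hω : ∀ v w, ω v w = - ω w v)
    (hcyc : ∀ (u : V) (p : G.Walk u u), p.IsCycle → walkSum ω p = 0)
    {u v : V} (p : G.Walk u v) : walkSum ω p.bypass = walkSum ω p := by
  induction p with
  | nil => rfl
  | @cons u v w h p ih =>
    rw [Walk.bypass]
    split_ifs with hs
    · -- the detour `h` followed by the part of `p.bypass` back to `u` is a closed path
      have hloop := walkSum_cons_eq_zero_of_isPath hω hcyc h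
        ((Walk.bypass_isPath p).takeUntil hs)
      have hsplit := congrArg (walkSum ω) (Walk.take_spec p.bypass hs)
      rw [walkSum_append] at hsplit
      rw [walkSum_cons] at hloop
      rw [walkSum_cons, ← ih]
      linarith
    · simp [ih]

lemma walkSum_eq_zero_of_closed (hω : ∀ v w, ω v w = - ω w v)
    (hcyc : ∀ (u : V) (p : G.Walk u u), p.IsCycle → walkSum ω p = 0)
    {u : V} (p : G.Walk u u) : walkSum ω p = 0 := by
  rw [← walkSum_bypass hω hcyc, (Walk.isPath_iff_nil.mp (Walk.bypass_isPath p)).eq_nil,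
    walkSum_nil]

lemma walkSum_eq_of_isCycle_eq_zero (hω : ∀ v w, ω v w = - ω w v)
    (hcyc : ∀ (u : V) (p : G.Walk u u), p.IsCycle → walkSum ω p = 0)
    {u v : V} (p q : G.Walk u v) : walkSum ω p = walkSum ω q := by
  have := walkSum_eq_zero_of_closed hω hcyc (p.append q.reverse)
  rw [walkSum_append, walkSum_reverse hω] at this
  linarith

end WalkSum

lemma mem_range_coboundary_of_walkSum_isCycle_eq_zero {Γ : SimpleGraph V} (ω : edgeForms Γ)
    (hcyc : ∀ (u : V) (p : Γ.Walk u u), p.IsCycle → walkSum ω p = 0) :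
    ω ∈ LinearMap.range (coboundary Γ) := by
  have hω : ∀ v w, (ω : V → V → ℝ) v w = -(ω : V → V → ℝ) w v := ω.2.1
  have walkFromBase (v : V) : Γ.Walk (Γ.connectedComponentMk v).out v :=
    (ConnectedComponent.exact (Γ.connectedComponentMk v).out_eq).some
  refine ⟨fun v => walkSum ω (walkFromBase v), Subtype.ext (funext fun v => funext fun w => ?_)⟩
  by_cases hvw : Γ.Adj v w
  · have hbase : (Γ.connectedComponentMk v).out = (Γ.connectedComponentMk w).out := by
      rw [ConnectedComponent.sound hvw.reachable]
    have := walkSum_eq_of_isCycle_eq_zero hω hcyc (walkFromBase w)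
      (((walkFromBase v).concat hvw).copy hbase rfl)
    simp only [coboundary_apply, if_pos hvw, this, walkSum_copy, walkSum_concat]
    ring
  · simp only [coboundary_apply, if_neg hvw, ω.2.2 v w hvw]

noncomputable def cycleSum (ω : V → V → ℝ) {n : ℕ} [NeZero n] (c : ZMod n → V) : ℝ :=
  ∑ i, ω (c i) (c (i + 1))

lemma cycleSum_sub (ω η : V → V → ℝ) {n : ℕ} [NeZero n] (c : ZMod n → V) :
    cycleSum (ω - η) c = cycleSum ω c - cycleSum η c :=
  Finset.sum_sub_distrib _ _

lemma cycleSum_coboundary {Γ : SimpleGraph V} {n : ℕ} [NeZero n] {c : ZMod n → V}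
    (hc : ∀ i, Γ.Adj (c i) (c (i + 1))) (f : V → ℝ) :
    cycleSum (coboundary Γ f : V → V → ℝ) c = 0 := by
  simp only [cycleSum, coboundary_apply, if_pos (hc _), Finset.sum_sub_distrib,
    Fintype.sum_equiv (Equiv.addRight 1) (fun i => f (c (i + 1))) (fun i => f (c i))
      (fun _ => rfl), sub_self]

namespace SimpleGraph.Walk

variable {G : SimpleGraph V} {u : V}

def cyclicVert (p : G.Walk u u) (i : ZMod p.length) : V := p.getVert i.val

lemma cyclicVert_add_one (p : G.Walk u u) [NeZero p.length] (i : ZMod p.length) :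
    p.cyclicVert (i + 1) = p.getVert (i.val + 1) := by
  have hi := ZMod.val_lt i
  rw [cyclicVert, ZMod.val_add, ZMod.val_one_eq_one_mod, Nat.add_mod_mod]
  rcases (by omega : i.val + 1 < p.length ∨ i.val + 1 = p.length) with h | h
  · rw [Nat.mod_eq_of_lt h]
  · rw [h, Nat.mod_self, getVert_zero, getVert_length]

lemma adj_cyclicVert_add_one (p : G.Walk u u) [NeZero p.length] (i : ZMod p.length) :
    G.Adj (p.cyclicVert i) (p.cyclicVert (i + 1)) := by
  rw [cyclicVert_add_one]
  exact p.adj_getVert_succ (ZMod.val_lt i)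

lemma IsCycle.injective_cyclicVert {p : G.Walk u u} (hp : p.IsCycle) :
    Injective p.cyclicVert := by
  have : NeZero p.length := ⟨by have := hp.three_le_length; omega⟩
  intro i j hij
  have hi := ZMod.val_lt i
  have hj := ZMod.val_lt j
  exact ZMod.val_injective _ (hp.getVert_injOn' (show i.val ≤ p.length - 1 by omega)
    (show j.val ≤ p.length - 1 by omega) hij)

end SimpleGraph.Walk

lemma walkSum_eq_cycleSum {G : SimpleGraph V} (ω : V → V → ℝ) {u : V} (p : G.Walk u u)
    [NeZero p.length] :
    walkSum ω p = cycleSum ω p.cyclicVert := by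
  rw [walkSum_eq_sum_range, cycleSum]
  simp only [Walk.cyclicVert_add_one]
  exact Finset.sum_nbij' (fun k => (k : ZMod p.length)) ZMod.val
    (fun _ _ => Finset.mem_univ _) (fun i _ => Finset.mem_range.mpr (ZMod.val_lt i))
    (fun k hk => ZMod.val_cast_of_lt (Finset.mem_range.mp hk))
    (fun i _ => ZMod.natCast_zmod_val i)
    (fun k hk => by simp only [Walk.cyclicVert, ZMod.val_cast_of_lt (Finset.mem_range.mp hk)])

def IsRotationOn (F : V → V) {n : ℕ} (c : ZMod n → V) : Prop :=
  ∃ k, ∀ i, F (c i) = c (i + k)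

section CycleForm

variable {Γ : SimpleGraph V} {n : ℕ} {c : ZMod n → V} (hc : ∀ i, Γ.Adj (c i) (c (i + 1)))

lemma cycleForm_apply (v w : V) :
    (cycleForm c hc : V → V → ℝ) v w =
      (if ∃ i, c i = v ∧ c (i + 1) = w then 1 else 0)
        - (if ∃ i, c i = w ∧ c (i + 1) = v then 1 else 0) := rfl

lemma cycleForm_apply_le_one (v w : V) : (cycleForm c hc : V → V → ℝ) v w ≤ 1 := by
  rw [cycleForm_apply]
  split_ifs <;> norm_num

lemma cycleForm_apply_add_one (hn : 3 ≤ n) (hinj : Injective c) (i : ZMod n) :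
    (cycleForm c hc : V → V → ℝ) (c i) (c (i + 1)) = 1 := by
  rw [cycleForm_apply, if_pos ⟨i, rfl, rfl⟩, if_neg, sub_zero]
  rintro ⟨j, hj, hj'⟩
  -- the reversed pair would force `i + 2 = i`, i.e. `n ∣ 2`
  rw [hinj hj, add_assoc] at hj'
  have h2 : ((2 : ℕ) : ZMod n) = 0 := by
    rw [Nat.cast_ofNat, ← one_add_one_eq_two]; exact add_eq_left.mp (hinj hj')
  have := Nat.le_of_dvd two_pos ((ZMod.natCast_eq_zero_iff 2 n).mp h2)
  omega

variable {F : Γ →g Γ}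

lemma isRotationOn_of_pullback_cycleForm_apply_eq_one [NeZero n] (hinj : Injective c)
    (h : ∀ i, (pullback F (cycleForm c hc) : V → V → ℝ) (c i) (c (i + 1)) = 1) :
    IsRotationOn F c := by
  have hstep : ∀ i, ∃ j, c j = F (c i) ∧ c (j + 1) = F (c (i + 1)) := by
    intro i
    have hi := h i
    rw [pullback_apply, if_pos (hc i), cycleForm_apply] at hi
    by_contra hne
    rw [if_neg hne] at hi
    split_ifs at hi <;> norm_num at hi
  choose J hJ using hstep
  have hJ_succ (i : ZMod n) : J (i + 1) = J i + 1 := hinj ((hJ (i + 1)).1.trans (hJ i).2.symm)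
  have hJ_natCast (m : ℕ) : J m = m + J 0 := by
    induction m with
    | zero => simp
    | succ m ih => rw [Nat.cast_succ, hJ_succ, ih]; ring
  refine ⟨J 0, fun i => ?_⟩
  rw [← (hJ i).1, ← ZMod.natCast_zmod_val i, hJ_natCast]

lemma isRotationOn_of_cycleSum_pullback_cycleForm [NeZero n] (hn : 3 ≤ n) (hinj : Injective c)
    (hsum : cycleSum (pullback F (cycleForm c hc) : V → V → ℝ) c
      = cycleSum (cycleForm c hc : V → V → ℝ) c) :
    IsRotationOn F c := by
  -- every term on the left is at most `1`, every term on the right is exactly `1`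
  have hle : ∀ i ∈ Finset.univ, (pullback F (cycleForm c hc) : V → V → ℝ) (c i) (c (i + 1))
      ≤ (cycleForm c hc : V → V → ℝ) (c i) (c (i + 1)) := by
    intro i _
    rw [pullback_apply, if_pos (hc i), cycleForm_apply_add_one hc hn hinj]
    exact cycleForm_apply_le_one hc _ _
  refine isRotationOn_of_pullback_cycleForm_apply_eq_one hc hinj fun i => ?_
  rw [(Finset.sum_eq_sum_iff_of_le hle).mp hsum i (Finset.mem_univ i),
    cycleForm_apply_add_one hc hn hinj]

lemma pullback_cycleForm_eq_self_of_isRotationOn (hF : Injective F) (hrot : IsRotationOn F c) :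
    pullback F (cycleForm c hc) = cycleForm c hc := by
  obtain ⟨k, hk⟩ := hrot
  have key (v w : V) :
      (∃ j, c j = F v ∧ c (j + 1) = F w) ↔ ∃ i, c i = v ∧ c (i + 1) = w := by
    constructor
    · rintro ⟨j, hv, hw⟩
      refine ⟨j - k, hF ?_, hF ?_⟩
      · rw [hk, sub_add_cancel, hv]
      · rw [hk, show j - k + 1 + k = j + 1 by ring, hw]
    · rintro ⟨i, rfl, rfl⟩
      exact ⟨i + k, (hk i).symm, by rw [hk, add_right_comm]⟩
  refine Subtype.ext (funext fun v => funext fun w => ?_)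
  rw [pullback_apply]
  split_ifs with hvw
  · simp only [cycleForm_apply, key]
  · exact ((cycleForm c hc).2.2 v w hvw).symm

lemma pullback_cycleForm_eq_self_iff_isRotationOn [NeZero n] (hF : Injective F) (hn : 3 ≤ n)
    (hinj : Injective c) :
    pullback F (cycleForm c hc) = cycleForm c hc ↔ IsRotationOn F c := by
  refine ⟨fun h => isRotationOn_of_pullback_cycleForm_apply_eq_one hc hinj fun i => ?_,
    pullback_cycleForm_eq_self_of_isRotationOn hc hF⟩
  rw [h, cycleForm_apply_add_one hc hn hinj]

end CycleForm

lemma cycleSum_pullback_of_isRotationOn {Γ : SimpleGraph V} {n : ℕ} [NeZero n] {c : ZMod n → V}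
    (hc : ∀ i, Γ.Adj (c i) (c (i + 1))) {F : Γ →g Γ} (hrot : IsRotationOn F c)
    (ω : edgeForms Γ) :
    cycleSum (pullback F ω : V → V → ℝ) c = cycleSum (ω : V → V → ℝ) c := by
  obtain ⟨k, hk⟩ := hrot
  simp only [cycleSum, pullback_apply, if_pos (hc _), hk, add_right_comm _ (1 : ZMod n) k]
  exact Fintype.sum_equiv (Equiv.addRight k) _ _ (fun _ => rfl)

theorem H1_action_trivial_iff_rotation_on_cycles_general
    (Γ : SimpleGraph V) (g : Γ ≃g Γ) :
    (∀ ω : edgeForms Γ, pullback g.toHom ω - ω ∈ LinearMap.range (coboundary Γ)) ↔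
      (∀ (n : ℕ), 3 ≤ n → ∀ (c : ZMod n → V), Function.Injective c →
        ∀ (hc : ∀ i, Γ.Adj (c i) (c (i + 1))),
          pullback g.toHom (cycleForm c hc) = cycleForm c hc) := by
  constructor
  · intro h n hn c hinj hc
    have : NeZero n := ⟨by omega⟩
    obtain ⟨f, hf⟩ := h (cycleForm c hc)
    have hsum := congrArg (fun ω : edgeForms Γ => cycleSum (ω : V → V → ℝ) c) hf
    simp only [cycleSum_coboundary hc, Submodule.coe_sub, cycleSum_sub] at hsum
    exact (pullback_cycleForm_eq_self_iff_isRotationOn hc g.injective hn hinj).mpr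
      (isRotationOn_of_cycleSum_pullback_cycleForm hc hn hinj (sub_eq_zero.mp hsum.symm))
  · intro h ω
    refine mem_range_coboundary_of_walkSum_isCycle_eq_zero _ fun u p hp => ?_
    have : NeZero p.length := ⟨by have := hp.three_le_length; omega⟩
    have hrot := (pullback_cycleForm_eq_self_iff_isRotationOn p.adj_cyclicVert_add_one
      g.injective hp.three_le_length hp.injective_cyclicVert).mp
      (h _ hp.three_le_length _ hp.injective_cyclicVert p.adj_cyclicVert_add_one)
    rw [walkSum_eq_cycleSum, Submodule.coe_sub, cycleSum_sub,
      cycleSum_pullback_of_isRotationOn p.adj_cyclicVert_add_one hrot, sub_self]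

/-- The induced action of an automorphism `g` on `H¹(Γ)` is the identity
iff `g` restricts to a rotation on each cycle of `Γ`, i.e. iff for every cycle subgraph
of `Γ`, given by an injective cyclic sequence `c : ZMod n → V` (`n ≥ 3`) of successively
adjacent vertices, the associated cycle form is fixed: `g*ω_C = ω_C`. -/
theorem H1_action_trivial_iff_rotation_on_cycles [Fintype V]
    (Γ : SimpleGraph V) (g : Γ ≃g Γ) :
    (∀ ω : edgeForms Γ, pullback g.toHom ω - ω ∈ LinearMap.range (coboundary Γ)) ↔
      (∀ (n : ℕ), 3 ≤ n → ∀ (c : ZMod n → V), Function.Injective c →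
        ∀ (hc : ∀ i, Γ.Adj (c i) (c (i + 1))),
          pullback g.toHom (cycleForm c hc) = cycleForm c hc) :=
  H1_action_trivial_iff_rotation_on_cycles_general Γ g
end

section
/- (Mayer-Vietoris Sequence for Graphs) Let Γ be a finite simple graph and let A and B be subgraphs of Γ with A ∪ B = Γ (union of vertex sets and of edge sets), with inclusion homomorphisms k : A → Γ, l : B → Γ, i : A ∩ B → A, j : A ∩ B → B. Then there exists a linear map δ : H⁰(A ∩ B) → H¹(Γ) such that the sequence 0 → H⁰(Γ) → H⁰(A) ⊕ H⁰(B) → H⁰(A ∩ B) → H¹(Γ) → H¹(A) ⊕ H¹(B) → H¹(A ∩ B) → 0 is exact, where the maps H^p(Γ) → H^p(A) ⊕ H^p(B) are k* ⊕ l* and the maps H^p(A) ⊕ H^p(B) → H^p(A ∩ B) are (f,g) ↦ i*f - j*g; in particular k* ⊕ l* is injective on H⁰(Γ), the sequence is exact at each intermediate term, and i* - j* is surjective onto H¹(A ∩ B). -/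
open SimpleGraph Function

open scoped Classical

variable {U V W : Type*}

lemma pullback_coboundary {G₁ : SimpleGraph U} {G₂ : SimpleGraph V} (F : G₁ →g G₂) (f : V → ℝ) :
    pullback F (coboundary G₂ f) = coboundary G₁ (fun v => f (F v)) := by
  apply Subtype.ext
  funext v w
  by_cases h : G₁.Adj v w
  · have h2 := F.map_adj h
    simp [h, h2]
  · simp [h]

lemma pullback_range_le {G₁ : SimpleGraph U} {G₂ : SimpleGraph V} (F : G₁ →g G₂) :
    LinearMap.range (coboundary G₂) ≤
      (LinearMap.range (coboundary G₁)).comap (pullback F) := by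
  rintro ω ⟨f, rfl⟩
  exact ⟨fun v => f (F v), (pullback_coboundary F f).symm⟩

/-- The induced map `F* : H¹(G₂) → H¹(G₁)`. -/
noncomputable def pullbackH1 {G₁ : SimpleGraph U} {G₂ : SimpleGraph V} (F : G₁ →g G₂) :
    H1 G₂ →ₗ[ℝ] H1 G₁ :=
  Submodule.mapQ _ _ (pullback F) (pullback_range_le F)

lemma pullback_ker_le {G₁ : SimpleGraph U} {G₂ : SimpleGraph V} (F : G₁ →g G₂) :
    ∀ f ∈ H0 G₂, (LinearMap.funLeft ℝ ℝ ⇑F) f ∈ H0 G₁ := by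
  intro f hf
  have h0 : coboundary G₂ f = 0 := hf
  show coboundary G₁ (fun v => f (F v)) = 0
  rw [← pullback_coboundary F f, h0, map_zero]

/-- The induced map `F* : H⁰(G₂) → H⁰(G₁)`. -/
noncomputable def pullbackH0 {G₁ : SimpleGraph U} {G₂ : SimpleGraph V} (F : G₁ →g G₂) :
    H0 G₂ →ₗ[ℝ] H0 G₁ :=
  LinearMap.restrict (LinearMap.funLeft ℝ ℝ ⇑F) (pullback_ker_le F)

section MayerVietoris

variable {Γ : SimpleGraph V} (A B : Γ.Subgraph)

/-- `k* ⊕ l* : H⁰(Γ) → H⁰(A) ⊕ H⁰(B)`. -/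
noncomputable def mvH0left : H0 Γ →ₗ[ℝ] H0 A.coe × H0 B.coe :=
  (pullbackH0 A.hom).prod (pullbackH0 B.hom)

/-- `i* - j* : H⁰(A) ⊕ H⁰(B) → H⁰(A ∩ B)`. -/
noncomputable def mvH0right : H0 A.coe × H0 B.coe →ₗ[ℝ] H0 (A ⊓ B).coe :=
  pullbackH0 (Subgraph.inclusion (inf_le_left : A ⊓ B ≤ A)) ∘ₗ
      LinearMap.fst ℝ (H0 A.coe) (H0 B.coe)
    - pullbackH0 (Subgraph.inclusion (inf_le_right : A ⊓ B ≤ B)) ∘ₗ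
      LinearMap.snd ℝ (H0 A.coe) (H0 B.coe)

/-- `k* ⊕ l* : H¹(Γ) → H¹(A) ⊕ H¹(B)`. -/
noncomputable def mvH1left : H1 Γ →ₗ[ℝ] H1 A.coe × H1 B.coe :=
  (pullbackH1 A.hom).prod (pullbackH1 B.hom)

/-- `i* - j* : H¹(A) ⊕ H¹(B) → H¹(A ∩ B)`. -/
noncomputable def mvH1right : H1 A.coe × H1 B.coe →ₗ[ℝ] H1 (A ⊓ B).coe :=
  pullbackH1 (Subgraph.inclusion (inf_le_left : A ⊓ B ≤ A)) ∘ₗ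
      LinearMap.fst ℝ (H1 A.coe) (H1 B.coe)
    - pullbackH1 (Subgraph.inclusion (inf_le_right : A ⊓ B ≤ B)) ∘ₗ
      LinearMap.snd ℝ (H1 A.coe) (H1 B.coe)

/-!
Restriction to `A` and `B`, followed by the difference of the restrictions to `A ∩ B`, gives for
`p = 0, 1` a short exact sequence `0 → Ωᵖ(Γ) → Ωᵖ(A) ⊕ Ωᵖ(B) → Ωᵖ(A ∩ B) → 0` commuting with `D`:
a cochain on `Γ` is determined by its restrictions because every vertex and edge lies in `A` or
`B`, cochains agreeing on `A ∩ B` glue, and every cochain on `A ∩ B` extends by zero. The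
Mayer–Vietoris sequence is the kernel–cokernel sequence the snake lemma attaches to `D` on this
ladder.
-/

namespace SnakeLemma

variable {R : Type*} [CommRing R]
  {M₁ M₂ M₃ N₁ N₂ N₃ K₁ K₂ K₃ C₁ C₂ C₃ : Type*}
  [AddCommGroup M₁] [Module R M₁] [AddCommGroup M₂] [Module R M₂] [AddCommGroup M₃] [Module R M₃]
  [AddCommGroup N₁] [Module R N₁] [AddCommGroup N₂] [Module R N₂] [AddCommGroup N₃] [Module R N₃]
  [AddCommGroup K₁] [Module R K₁] [AddCommGroup K₂] [Module R K₂] [AddCommGroup K₃] [Module R K₃]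
  [AddCommGroup C₁] [Module R C₁] [AddCommGroup C₂] [Module R C₂] [AddCommGroup C₃] [Module R C₃]
  {f₁ : M₁ →ₗ[R] M₂} {f₂ : M₂ →ₗ[R] M₃} {g₁ : N₁ →ₗ[R] N₂} {g₂ : N₂ →ₗ[R] N₃}
  {i₁ : M₁ →ₗ[R] N₁} {i₂ : M₂ →ₗ[R] N₂} {i₃ : M₃ →ₗ[R] N₃}
  {ι₁ : K₁ →ₗ[R] M₁} {ι₂ : K₂ →ₗ[R] M₂} {ι₃ : K₃ →ₗ[R] M₃}
  {π₁ : N₁ →ₗ[R] C₁} {π₂ : N₂ →ₗ[R] C₂} {π₃ : N₃ →ₗ[R] C₃}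
  {F₁ : K₁ →ₗ[R] K₂} {F₂ : K₂ →ₗ[R] K₃} {G₁ : C₁ →ₗ[R] C₂} {G₂ : C₂ →ₗ[R] C₃}

-- `Kₖ` and `Cₖ` are the kernel and cokernel of the vertical map `iₖ`, presented by `ιₖ` and `πₖ`.

lemma exact_kernel_maps (hf : Exact f₁ f₂) (hg₁ : Injective g₁) (h₁ : g₁ ∘ₗ i₁ = i₂ ∘ₗ f₁)
    (hι₁ : Exact ι₁ i₁) (hι₂ : Exact ι₂ i₂) (hι₂' : Injective ι₂) (hι₃' : Injective ι₃)
    (hF₁ : f₁ ∘ₗ ι₁ = ι₂ ∘ₗ F₁) (hF₂ : f₂ ∘ₗ ι₂ = ι₃ ∘ₗ F₂) : Exact F₁ F₂ := by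
  intro x
  constructor
  · intro hx
    obtain ⟨m, hm⟩ := (hf (ι₂ x)).1 (by
      rw [← LinearMap.comp_apply, hF₂, LinearMap.comp_apply, hx, map_zero])
    obtain ⟨k, rfl⟩ := (hι₁ m).1 (hg₁ (by
      rw [← LinearMap.comp_apply, h₁, LinearMap.comp_apply, hm, hι₂.apply_apply_eq_zero,
        map_zero]))
    exact ⟨k, hι₂' (by rw [← LinearMap.comp_apply, ← hF₁, LinearMap.comp_apply, hm])⟩
  · rintro ⟨k, rfl⟩
    apply hι₃'
    rw [← LinearMap.comp_apply, ← hF₂, LinearMap.comp_apply, ← LinearMap.comp_apply ι₂, ← hF₁,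
      LinearMap.comp_apply, hf.apply_apply_eq_zero, map_zero]

lemma exact_cokernel_maps (hf₂ : Surjective f₂) (hg : Exact g₁ g₂) (h₂ : g₂ ∘ₗ i₂ = i₃ ∘ₗ f₂)
    (hπ₂ : Exact i₂ π₂) (hπ₃ : Exact i₃ π₃) (hπ₁' : Surjective π₁) (hπ₂' : Surjective π₂)
    (hG₁ : G₁ ∘ₗ π₁ = π₂ ∘ₗ g₁) (hG₂ : G₂ ∘ₗ π₂ = π₃ ∘ₗ g₂) : Exact G₁ G₂ := by
  intro c
  constructor
  · intro hc
    obtain ⟨n, rfl⟩ := hπ₂' c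
    obtain ⟨m₃, hm₃⟩ := (hπ₃ (g₂ n)).1 (by
      rw [← LinearMap.comp_apply, ← hG₂, LinearMap.comp_apply, hc])
    obtain ⟨m₂, rfl⟩ := hf₂ m₃
    obtain ⟨n₁, hn₁⟩ := (hg (n - i₂ m₂)).1 (by
      rw [map_sub, ← LinearMap.comp_apply g₂, h₂, LinearMap.comp_apply, hm₃, sub_self])
    refine ⟨π₁ n₁, ?_⟩
    rw [← LinearMap.comp_apply, hG₁, LinearMap.comp_apply, hn₁, map_sub,
      hπ₂.apply_apply_eq_zero, sub_zero]
  · rintro ⟨c₁, rfl⟩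
    obtain ⟨n₁, rfl⟩ := hπ₁' c₁
    rw [← LinearMap.comp_apply G₁, hG₁, LinearMap.comp_apply, ← LinearMap.comp_apply G₂, hG₂,
      LinearMap.comp_apply, hg.apply_apply_eq_zero, map_zero]

theorem exists_six_term_exact
    (hf₁ : Injective f₁) (hf : Exact f₁ f₂) (hf₂ : Surjective f₂)
    (hg₁ : Injective g₁) (hg : Exact g₁ g₂) (hg₂ : Surjective g₂)
    (h₁ : g₁ ∘ₗ i₁ = i₂ ∘ₗ f₁) (h₂ : g₂ ∘ₗ i₂ = i₃ ∘ₗ f₂)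
    (hι₁ : Exact ι₁ i₁) (hι₂ : Exact ι₂ i₂) (hι₃ : Exact ι₃ i₃)
    (hι₁' : Injective ι₁) (hι₂' : Injective ι₂) (hι₃' : Injective ι₃)
    (hπ₁ : Exact i₁ π₁) (hπ₂ : Exact i₂ π₂) (hπ₃ : Exact i₃ π₃)
    (hπ₁' : Surjective π₁) (hπ₂' : Surjective π₂) (hπ₃' : Surjective π₃)
    (hF₁ : f₁ ∘ₗ ι₁ = ι₂ ∘ₗ F₁) (hF₂ : f₂ ∘ₗ ι₂ = ι₃ ∘ₗ F₂)
    (hG₁ : G₁ ∘ₗ π₁ = π₂ ∘ₗ g₁) (hG₂ : G₂ ∘ₗ π₂ = π₃ ∘ₗ g₂) :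
    ∃ δ : K₃ →ₗ[R] C₁, Injective F₁ ∧ Exact F₁ F₂ ∧ Exact F₂ δ ∧ Exact δ G₁ ∧
      Exact G₁ G₂ ∧ Surjective G₂ := by
  refine ⟨δ' i₁ i₂ i₃ f₁ f₂ hf g₁ g₂ hg h₁ h₂ ι₃ hι₃ π₁ hπ₁ hf₂ hg₁,
    ?_, exact_kernel_maps hf hg₁ h₁ hι₁ hι₂ hι₂' hι₃' hF₁ hF₂,
    exact_δ'_right i₁ i₂ i₃ f₁ f₂ hf g₁ g₂ hg h₁ h₂ ι₂ hι₂ ι₃ hι₃ π₁ hπ₁ hf₂ hg₁ F₂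
      hF₂ hι₃',
    exact_δ'_left i₁ i₂ i₃ f₁ f₂ hf g₁ g₂ hg h₁ h₂ ι₃ hι₃ π₁ hπ₁ π₂ hπ₂ hf₂ hg₁ G₁
      hG₁ hπ₁',
    exact_cokernel_maps hf₂ hg h₂ hπ₂ hπ₃ hπ₁' hπ₂' hG₁ hG₂, ?_⟩
  · refine Injective.of_comp (f := ι₂) ?_
    rw [← LinearMap.coe_comp, ← hF₁, LinearMap.coe_comp]
    exact hf₁.comp hι₁'
  · refine Surjective.of_comp (g := π₂) ?_
    rw [← LinearMap.coe_comp, hG₂, LinearMap.coe_comp]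
    exact hπ₃'.comp hg₂

end SnakeLemma

lemma LinearMap.exact_prodMap {R M N P M' N' P' : Type*} [Semiring R] [AddCommMonoid M]
    [AddCommMonoid N] [AddCommMonoid P] [AddCommMonoid M'] [AddCommMonoid N'] [AddCommMonoid P']
    [Module R M] [Module R N] [Module R P] [Module R M'] [Module R N'] [Module R P']
    {f : M →ₗ[R] N} {g : N →ₗ[R] P} {f' : M' →ₗ[R] N'} {g' : N' →ₗ[R] P'}
    (h : Exact f g) (h' : Exact f' g') : Exact (f.prodMap f') (g.prodMap g') := by
  rintro ⟨x, y⟩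
  simp only [LinearMap.coe_prodMap, Prod.map_apply, Prod.mk_eq_zero, h x, h' y,
    Set.range_prodMap, Set.mem_prod]

lemma edgeForms_ext {G : SimpleGraph U} {α β : edgeForms G}
    (h : ∀ v w, G.Adj v w → (α : U → U → ℝ) v w = (β : U → U → ℝ) v w) : α = β := by
  ext v w
  by_cases hvw : G.Adj v w
  · exact h v w hvw
  · rw [α.2.2 v w hvw, β.2.2 v w hvw]

lemma pullback_apply_of_adj {G₁ : SimpleGraph U} {G₂ : SimpleGraph V} (F : G₁ →g G₂)
    (ω : edgeForms G₂) {v w : U} (h : G₁.Adj v w) :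
    (pullback F ω : U → U → ℝ) v w = (ω : V → V → ℝ) (F v) (F w) := by
  rw [pullback_apply, if_pos h]

lemma apply_eq_zero_of_pullback_eq_zero {G₁ : SimpleGraph U} {G₂ : SimpleGraph V}
    {F : G₁ →g G₂} {ω : edgeForms G₂} (hω : pullback F ω = 0) {v w : U} (h : G₁.Adj v w) :
    (ω : V → V → ℝ) (F v) (F w) = 0 := by
  rw [← pullback_apply_of_adj F ω h, hω]
  rfl

lemma pullback_comp {G₀ : SimpleGraph W} {G₁ : SimpleGraph U} {G₂ : SimpleGraph V}
    (F : G₁ →g G₂) (E : G₀ →g G₁) (ω : edgeForms G₂) :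
    pullback (F.comp E) ω = pullback E (pullback F ω) :=
  edgeForms_ext fun _ _ h => by
    rw [pullback_apply_of_adj _ _ h, pullback_apply_of_adj _ _ h,
      pullback_apply_of_adj _ _ (E.map_adj h)]
    rfl

noncomputable def extendForm (H : Γ.Subgraph) (α : edgeForms H.coe) : edgeForms Γ :=
  ⟨fun v w => if h : H.Adj v w then
      (α : H.verts → H.verts → ℝ) ⟨v, H.edge_vert h⟩ ⟨w, H.edge_vert h.symm⟩ else 0, by
    refine ⟨fun v w => ?_, fun v w h => dif_neg fun h' => h (H.adj_sub h')⟩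
    dsimp only
    by_cases h : H.Adj v w
    · rw [dif_pos h, dif_pos h.symm]
      exact α.2.1 _ _
    · rw [dif_neg h, dif_neg fun h' => h h'.symm, neg_zero]⟩

lemma extendForm_apply_of_adj (H : Γ.Subgraph) (α : edgeForms H.coe) {v w : V}
    (h : H.Adj v w) : (extendForm H α : V → V → ℝ) v w =
      (α : H.verts → H.verts → ℝ) ⟨v, H.edge_vert h⟩ ⟨w, H.edge_vert h.symm⟩ :=
  dif_pos h

lemma pullback_hom_extendForm (H : Γ.Subgraph) (α : edgeForms H.coe) :
    pullback H.hom (extendForm H α) = α :=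
  edgeForms_ext fun _ _ h => by
    rw [pullback_apply_of_adj _ _ h]
    exact extendForm_apply_of_adj H α h

lemma surjective_pullback_inclusion {H K : Γ.Subgraph} (h : K ≤ H) :
    Surjective (pullback (Subgraph.inclusion h)) := fun α =>
  ⟨pullback H.hom (extendForm K α), by
    rw [← pullback_comp]
    exact pullback_hom_extendForm K α⟩

lemma pullback_hom_extendForm_eq_zero {H K : Γ.Subgraph} (α : edgeForms H.coe)
    (hα : pullback (Subgraph.inclusion (inf_le_right : K ⊓ H ≤ H)) α = 0) :
    pullback K.hom (extendForm H α) = 0 :=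
  edgeForms_ext fun v w hK => by
    rw [pullback_apply_of_adj _ _ hK]
    by_cases hH : H.Adj v w
    · exact (extendForm_apply_of_adj H α hH).trans
        (apply_eq_zero_of_pullback_eq_zero hα (v := ⟨v, v.2, H.edge_vert hH⟩)
          (w := ⟨w, w.2, H.edge_vert hH.symm⟩) ⟨hK, hH⟩)
    · exact dif_neg hH

noncomputable def mvΩ0left : (V → ℝ) →ₗ[ℝ] (A.verts → ℝ) × (B.verts → ℝ) :=
  (LinearMap.funLeft ℝ ℝ ⇑A.hom).prod (LinearMap.funLeft ℝ ℝ ⇑B.hom)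

noncomputable def mvΩ0right : (A.verts → ℝ) × (B.verts → ℝ) →ₗ[ℝ] ((A ⊓ B).verts → ℝ) :=
  LinearMap.funLeft ℝ ℝ ⇑(Subgraph.inclusion (inf_le_left : A ⊓ B ≤ A)) ∘ₗ LinearMap.fst ℝ _ _
    - LinearMap.funLeft ℝ ℝ ⇑(Subgraph.inclusion (inf_le_right : A ⊓ B ≤ B)) ∘ₗ
      LinearMap.snd ℝ _ _

noncomputable def mvΩ1left : edgeForms Γ →ₗ[ℝ] edgeForms A.coe × edgeForms B.coe :=
  (pullback A.hom).prod (pullback B.hom)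

noncomputable def mvΩ1right : edgeForms A.coe × edgeForms B.coe →ₗ[ℝ] edgeForms (A ⊓ B).coe :=
  pullback (Subgraph.inclusion (inf_le_left : A ⊓ B ≤ A)) ∘ₗ LinearMap.fst ℝ _ _
    - pullback (Subgraph.inclusion (inf_le_right : A ⊓ B ≤ B)) ∘ₗ LinearMap.snd ℝ _ _

lemma SimpleGraph.Subgraph.mem_or_mem_of_sup_eq_top (hAB : A ⊔ B = ⊤) (v : V) :
    v ∈ A.verts ∨ v ∈ B.verts := by
  simpa using congrArg (v ∈ ·.verts) hAB

lemma SimpleGraph.Subgraph.adj_or_adj_of_sup_eq_top (hAB : A ⊔ B = ⊤) {v w : V} (h : Γ.Adj v w) :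
    A.Adj v w ∨ B.Adj v w := by
  simpa [h] using congrArg (·.Adj v w) hAB

lemma injective_mvΩ0left (hAB : A ⊔ B = ⊤) : Injective (mvΩ0left A B) := by
  intro f g hfg
  funext v
  rcases Subgraph.mem_or_mem_of_sup_eq_top A B hAB v with hv | hv
  · exact congrFun (congrArg Prod.fst hfg) ⟨v, hv⟩
  · exact congrFun (congrArg Prod.snd hfg) ⟨v, hv⟩

lemma exact_mvΩ0left_mvΩ0right : Exact (mvΩ0left A B) (mvΩ0right A B) := by
  rintro ⟨g, h⟩
  constructor
  · intro hgh
    have hgh : ∀ v (hA : v ∈ A.verts) (hB : v ∈ B.verts), g ⟨v, hA⟩ = h ⟨v, hB⟩ :=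
      fun v hA hB => sub_eq_zero.1 (congrFun hgh ⟨v, hA, hB⟩)
    refine ⟨fun v => if hA : v ∈ A.verts then g ⟨v, hA⟩ else if hB : v ∈ B.verts then
      h ⟨v, hB⟩ else 0, Prod.ext (funext fun ⟨v, hA⟩ => dif_pos hA) (funext fun ⟨v, hB⟩ => ?_)⟩
    by_cases hA : v ∈ A.verts
    · exact (dif_pos hA).trans (hgh v hA hB)
    · exact (dif_neg hA).trans (dif_pos hB)
  · rintro ⟨f, hf⟩
    rw [← hf]
    exact sub_self _

lemma surjective_mvΩ0right : Surjective (mvΩ0right A B) := fun k => by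
  obtain ⟨g, rfl⟩ := LinearMap.funLeft_surjective_of_injective ℝ ℝ _
    (Subgraph.inclusion.injective (inf_le_left : A ⊓ B ≤ A)) k
  exact ⟨(g, 0), by simp [mvΩ0right]⟩

lemma injective_mvΩ1left (hAB : A ⊔ B = ⊤) : Injective (mvΩ1left A B) := by
  refine (injective_iff_map_eq_zero _).2 fun ω hω => edgeForms_ext fun v w h => ?_
  rcases Subgraph.adj_or_adj_of_sup_eq_top A B hAB h with hA | hB
  · exact apply_eq_zero_of_pullback_eq_zero (congrArg Prod.fst hω)
      (v := ⟨v, A.edge_vert hA⟩) (w := ⟨w, A.edge_vert hA.symm⟩) hA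
  · exact apply_eq_zero_of_pullback_eq_zero (congrArg Prod.snd hω)
      (v := ⟨v, B.edge_vert hB⟩) (w := ⟨w, B.edge_vert hB.symm⟩) hB

lemma exact_mvΩ1left_mvΩ1right : Exact (mvΩ1left A B) (mvΩ1right A B) := by
  rintro ⟨α, β⟩
  constructor
  · intro hαβ
    have hαβ : pullback (Subgraph.inclusion (inf_le_left : A ⊓ B ≤ A)) α =
        pullback (Subgraph.inclusion (inf_le_right : A ⊓ B ≤ B)) β := sub_eq_zero.1 hαβ
    -- `extendForm A α` already restricts to `α` on `A`; the correction `γ` needed on `B`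
    -- vanishes on `A ∩ B`, so its extension is invisible from `A`.
    set γ := β - pullback B.hom (extendForm A α)
    have hγ : pullback (Subgraph.inclusion (inf_le_right : A ⊓ B ≤ B)) γ = 0 := by
      rw [map_sub, ← pullback_comp,
        show B.hom.comp (Subgraph.inclusion (inf_le_right : A ⊓ B ≤ B)) =
          A.hom.comp (Subgraph.inclusion (inf_le_left : A ⊓ B ≤ A)) from rfl,
        pullback_comp, pullback_hom_extendForm, hαβ, sub_self]
    refine ⟨extendForm A α + extendForm B γ, Prod.ext ?_ ?_⟩
    · show pullback A.hom _ = α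
      rw [map_add, pullback_hom_extendForm, pullback_hom_extendForm_eq_zero γ hγ, add_zero]
    · show pullback B.hom _ = β
      rw [map_add, pullback_hom_extendForm, add_sub_cancel]
  · rintro ⟨ω, hω⟩
    rw [← hω]
    show pullback _ (pullback A.hom ω) - pullback _ (pullback B.hom ω) = 0
    rw [← pullback_comp, ← pullback_comp]
    exact sub_self _

lemma surjective_mvΩ1right : Surjective (mvΩ1right A B) := fun γ => by
  obtain ⟨α, rfl⟩ := surjective_pullback_inclusion (inf_le_left : A ⊓ B ≤ A) γ
  exact ⟨(α, 0), by simp [mvΩ1right]⟩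

lemma mvΩ1left_comp_coboundary : mvΩ1left A B ∘ₗ coboundary Γ =
    (coboundary A.coe).prodMap (coboundary B.coe) ∘ₗ mvΩ0left A B :=
  LinearMap.ext fun f => Prod.ext (pullback_coboundary _ f) (pullback_coboundary _ f)

lemma mvΩ1right_comp_coboundary :
    mvΩ1right A B ∘ₗ (coboundary A.coe).prodMap (coboundary B.coe) =
      coboundary (A ⊓ B).coe ∘ₗ mvΩ0right A B :=
  LinearMap.ext fun ⟨g, h⟩ => by
    simp only [mvΩ1right, mvΩ0right, LinearMap.comp_apply, LinearMap.prodMap_apply,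
      LinearMap.sub_apply, LinearMap.fst_apply, LinearMap.snd_apply, pullback_coboundary, map_sub]
    rfl

lemma exact_subtype_H0 (G : SimpleGraph U) : Exact (H0 G).subtype (coboundary G) :=
  LinearMap.exact_subtype_ker_map _

theorem mayer_vietoris_for_graphs_general {Γ : SimpleGraph V}
    (A B : Γ.Subgraph) (hAB : A ⊔ B = ⊤) :
    ∃ δ : H0 (A ⊓ B).coe →ₗ[ℝ] H1 Γ,
      Function.Injective ⇑(mvH0left A B) ∧
      Function.Exact ⇑(mvH0left A B) ⇑(mvH0right A B) ∧
      Function.Exact ⇑(mvH0right A B) ⇑δ ∧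
      Function.Exact ⇑δ ⇑(mvH1left A B) ∧
      Function.Exact ⇑(mvH1left A B) ⇑(mvH1right A B) ∧
      Function.Surjective ⇑(mvH1right A B) :=
  SnakeLemma.exists_six_term_exact
    (injective_mvΩ0left A B hAB) (exact_mvΩ0left_mvΩ0right A B) (surjective_mvΩ0right A B)
    (injective_mvΩ1left A B hAB) (exact_mvΩ1left_mvΩ1right A B) (surjective_mvΩ1right A B)
    (mvΩ1left_comp_coboundary A B) (mvΩ1right_comp_coboundary A B)
    (exact_subtype_H0 _) (LinearMap.exact_prodMap (exact_subtype_H0 _) (exact_subtype_H0 _))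
    (exact_subtype_H0 _)
    Subtype.val_injective (Subtype.val_injective.prodMap Subtype.val_injective)
    Subtype.val_injective
    (LinearMap.exact_map_mkQ_range _)
    (LinearMap.exact_prodMap (LinearMap.exact_map_mkQ_range _) (LinearMap.exact_map_mkQ_range _))
    (LinearMap.exact_map_mkQ_range _)
    (Submodule.mkQ_surjective _) ((Submodule.mkQ_surjective _).prodMap (Submodule.mkQ_surjective _))
    (Submodule.mkQ_surjective _)
    rfl rfl rfl rfl

/-- Mayer–Vietoris Sequence for Graphs. Let `Γ` be a finite simple
graph and `A`, `B` subgraphs with `A ∪ B = Γ`. Then there is a connecting map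
`δ : H⁰(A ∩ B) → H¹(Γ)` making the sequence
`0 → H⁰(Γ) → H⁰(A) ⊕ H⁰(B) → H⁰(A ∩ B) → H¹(Γ) → H¹(A) ⊕ H¹(B) → H¹(A ∩ B) → 0`
exact, where the maps are `k* ⊕ l*` and `(f,g) ↦ i*f - j*g`. -/
theorem mayer_vietoris_for_graphs [Fintype V] {Γ : SimpleGraph V}
    (A B : Γ.Subgraph) (hAB : A ⊔ B = ⊤) :
    ∃ δ : H0 (A ⊓ B).coe →ₗ[ℝ] H1 Γ,
      Function.Injective ⇑(mvH0left A B) ∧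
      Function.Exact ⇑(mvH0left A B) ⇑(mvH0right A B) ∧
      Function.Exact ⇑(mvH0right A B) ⇑δ ∧
      Function.Exact ⇑δ ⇑(mvH1left A B) ∧
      Function.Exact ⇑(mvH1left A B) ⇑(mvH1right A B) ∧
      Function.Surjective ⇑(mvH1right A B) :=
  mayer_vietoris_for_graphs_general A B hAB

end MayerVietoris
end
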